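/- Let n ≥ 1, A ∈ ℂ^{n×n}, t ∈ ℝ, and A(t) = cos(t)·H + sin(t)·K where H = (A + A*)/2 and K = (A − A*)/(2i). Suppose x ∈ ℂⁿ is a unit vector with A(t)x = λx, where λ ∈ ℝ is the largest eigenvalue of the Hermitian matrix A(t). Then x*Ax lies on the boundary of the field of values, i.e. x*Ax ∈ frontier F(A) (the topological frontier of F(A) as a subset of ℂ). -/

import Mathlib

open Matrix

/-- The quadratic form x*Ax = ⟨x, Ax⟩ for A ∈ ℂ^{n×n} and x ∈ ℂⁿ. -/
noncomputable def qf {n : ℕ} (A : Matrix (Fin n) (Fin n) ℂ) (x : EuclideanSpace ℂ (Fin n)) : ℂ :=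
  inner ℂ x (Matrix.toEuclideanLin A x)

/-- The field of values (numerical range) F(A) = { x*Ax : ‖x‖ = 1 }. -/
noncomputable def numericalRange {n : ℕ} (A : Matrix (Fin n) (Fin n) ℂ) : Set ℂ :=
  { z | ∃ x : EuclideanSpace ℂ (Fin n), ‖x‖ = 1 ∧ qf A x = z }

/-- The Hermitian part H = (A + A*)/2. -/
noncomputable def hermPart {n : ℕ} (A : Matrix (Fin n) (Fin n) ℂ) : Matrix (Fin n) (Fin n) ℂ :=
  (2 : ℂ)⁻¹ • (A + Aᴴ)

/-- The skew part K = (A − A*)/(2i). -/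
noncomputable def skewPart {n : ℕ} (A : Matrix (Fin n) (Fin n) ℂ) : Matrix (Fin n) (Fin n) ℂ :=
  (2 * Complex.I)⁻¹ • (A - Aᴴ)

/-- The Hermitian matrix flow A(t) = cos(t)·H + sin(t)·K. -/
noncomputable def matFlow {n : ℕ} (A : Matrix (Fin n) (Fin n) ℂ) (t : ℝ) : Matrix (Fin n) (Fin n) ℂ :=
  (Real.cos t : ℂ) • hermPart A + (Real.sin t : ℂ) • skewPart A

/-!
Writing `f_t z = cos t · Re z + sin t · Im z`, one has `f_t (x*Ax) = x*A(t)x` because the Hermitian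
and skew parts of `A` have quadratic forms `Re (x*Ax)` and `Im (x*Ax)`. The quadratic form of the
Hermitian matrix `A(t)` on unit vectors is at most its largest eigenvalue `λ`, with equality at the
eigenvector `x`, so `f_t` attains its maximum over `F(A)` at `x*Ax`. A nonzero continuous linear
functional is an open map, so it cannot attain a maximum over a set at an interior point.
-/

theorem mem_frontier_of_isMaxOn {E : Type*} [AddCommGroup E] [TopologicalSpace E]
    [ContinuousAdd E] [Module ℝ E] [ContinuousSMul ℝ E] {s : Set E} {z : E}
    (f : StrongDual ℝ E) (hf : f ≠ 0) (hz : z ∈ s) (hmax : IsMaxOn f s z) :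
    z ∈ frontier s := by
  refine ⟨subset_closure hz, fun hint => ?_⟩
  have himage : f '' interior s ∈ nhds (f z) :=
    (f.isOpenMap_of_ne_zero hf _ isOpen_interior).mem_nhds ⟨z, hint, rfl⟩
  obtain ⟨r, hr, w, hw, rfl⟩ := Filter.Eventually.exists_gt himage
  exact (hmax (interior_subset hw)).not_gt hr

open scoped MatrixOrder in
theorem Matrix.IsHermitian.re_inner_toEuclideanLin_le {𝕜 ι : Type*} [RCLike 𝕜] [Fintype ι]
    [DecidableEq ι] {B : Matrix ι ι 𝕜} (hB : B.IsHermitian) {lam : ℝ}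
    (hlam : ∀ r ∈ spectrum ℝ B, r ≤ lam) (y : EuclideanSpace 𝕜 ι) :
    RCLike.re (inner 𝕜 y (toEuclideanLin B y)) ≤ lam * ‖y‖ ^ 2 := by
  have hpos : (toEuclideanLin (algebraMap ℝ _ lam - B)).IsPositive :=
    Matrix.isPositive_toEuclideanLin_iff.2
      (sub_nonneg.2 (le_algebraMap_of_spectrum_le hlam hB.isSelfAdjoint)).posSemidef
  have h := hpos.re_inner_nonneg_right y
  rw [map_sub, LinearMap.sub_apply, inner_sub_right, map_sub, sub_nonneg] at h
  calc RCLike.re (inner 𝕜 y (toEuclideanLin B y))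
      ≤ RCLike.re (inner 𝕜 y (toEuclideanLin (algebraMap ℝ _ lam) y)) := h
    _ = lam * ‖y‖ ^ 2 := by
      rw [Algebra.algebraMap_eq_smul_one, RCLike.real_smul_eq_coe_smul (K := 𝕜), map_smul,
        LinearMap.smul_apply, toLpLin_one, LinearMap.id_apply, inner_smul_real_right, RCLike.smul_re, inner_self_eq_norm_sq]

theorem qf_conjTranspose {n : ℕ} (A : Matrix (Fin n) (Fin n) ℂ) (y : EuclideanSpace ℂ (Fin n)) :
    qf Aᴴ y = starRingEnd ℂ (qf A y) := by
  rw [qf, qf, toEuclideanLin_conjTranspose_eq_adjoint, LinearMap.adjoint_inner_right,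
    inner_conj_symm]

theorem qf_add {n : ℕ} (A B : Matrix (Fin n) (Fin n) ℂ) (y : EuclideanSpace ℂ (Fin n)) :
    qf (A + B) y = qf A y + qf B y := by
  simp only [qf, map_add, LinearMap.add_apply, inner_add_right]

theorem qf_sub {n : ℕ} (A B : Matrix (Fin n) (Fin n) ℂ) (y : EuclideanSpace ℂ (Fin n)) :
    qf (A - B) y = qf A y - qf B y := by
  simp only [qf, map_sub, LinearMap.sub_apply, inner_sub_right]

theorem qf_smul {n : ℕ} (c : ℂ) (A : Matrix (Fin n) (Fin n) ℂ) (y : EuclideanSpace ℂ (Fin n)) :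
    qf (c • A) y = c * qf A y := by
  simp only [qf, map_smul, LinearMap.smul_apply, inner_smul_right]

theorem qf_hermPart {n : ℕ} (A : Matrix (Fin n) (Fin n) ℂ) (y : EuclideanSpace ℂ (Fin n)) :
    qf (hermPart A) y = (qf A y).re := by
  rw [hermPart, qf_smul, qf_add, qf_conjTranspose, Complex.add_conj]
  push_cast
  ring

theorem qf_skewPart {n : ℕ} (A : Matrix (Fin n) (Fin n) ℂ) (y : EuclideanSpace ℂ (Fin n)) :
    qf (skewPart A) y = (qf A y).im := by
  rw [skewPart, qf_smul, qf_sub, qf_conjTranspose, Complex.sub_conj]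
  push_cast
  field_simp

theorem matFlow_isHermitian {n : ℕ} (A : Matrix (Fin n) (Fin n) ℂ) (t : ℝ) :
    (matFlow A t).IsHermitian := by
  ext i j
  simp only [matFlow, hermPart, skewPart, Matrix.conjTranspose_apply, Matrix.add_apply,
    Matrix.smul_apply, Matrix.sub_apply, smul_eq_mul, Complex.star_def, map_add,
    _root_.map_mul, map_sub, map_inv₀, Complex.conj_ofReal, map_ofNat, Complex.conj_I,
    Complex.conj_conj]
  ring

noncomputable def directionalFunctional (t : ℝ) : StrongDual ℝ ℂ :=
  Real.cos t • Complex.reCLM + Real.sin t • Complex.imCLM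

theorem directionalFunctional_apply (t : ℝ) (z : ℂ) :
    directionalFunctional t z = Real.cos t * z.re + Real.sin t * z.im := rfl

theorem directionalFunctional_ne_zero (t : ℝ) : directionalFunctional t ≠ 0 := by
  intro h
  have h1 := congrArg (fun f => f ⟨Real.cos t, Real.sin t⟩) h
  simp only [directionalFunctional_apply, _root_.zero_apply] at h1
  nlinarith [Real.sin_sq_add_cos_sq t]

theorem qf_matFlow {n : ℕ} (A : Matrix (Fin n) (Fin n) ℂ) (t : ℝ) (y : EuclideanSpace ℂ (Fin n)) :
    qf (matFlow A t) y = directionalFunctional t (qf A y) := by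
  rw [matFlow, qf_add, qf_smul, qf_smul, qf_hermPart, qf_skewPart, directionalFunctional_apply]
  push_cast
  ring

theorem eigenvector_point_on_boundary_general (n : ℕ)
    (A : Matrix (Fin n) (Fin n) ℂ) (t : ℝ) (lam : ℝ)
    (hlam : IsGreatest {r : ℝ | (r : ℂ) ∈ spectrum ℂ (matFlow A t)} lam)
    (x : EuclideanSpace ℂ (Fin n)) (hx : ‖x‖ = 1)
    (heig : Matrix.toEuclideanLin (matFlow A t) x = (lam : ℂ) • x) :
    qf A x ∈ frontier (numericalRange A) := by
  have hspec : ∀ r ∈ spectrum ℝ (matFlow A t), r ≤ lam :=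
    fun r hr => hlam.2 (spectrum.algebraMap_mem ℂ hr)
  have hx_max : directionalFunctional t (qf A x) = lam := by
    have h := qf_matFlow A t x
    rw [qf, heig, inner_smul_right, inner_self_eq_norm_sq_to_K, hx] at h
    norm_num at h
    exact_mod_cast h.symm
  refine mem_frontier_of_isMaxOn _ (directionalFunctional_ne_zero t) ⟨x, hx, rfl⟩ ?_
  rintro _ ⟨y, hy, rfl⟩
  have h : (qf (matFlow A t) y).re ≤ lam * ‖y‖ ^ 2 :=
    (matFlow_isHermitian A t).re_inner_toEuclideanLin_le hspec y
  rwa [qf_matFlow, Complex.ofReal_re, hy, one_pow, mul_one, ← hx_max] at h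

/-- if x is a unit eigenvector of A(t) for its largest eigenvalue λ, then
x*Ax lies on the boundary (topological frontier) of F(A). -/
theorem eigenvector_point_on_boundary (n : ℕ) (hn : 1 ≤ n)
    (A : Matrix (Fin n) (Fin n) ℂ) (t : ℝ) (lam : ℝ)
    (hlam : IsGreatest {r : ℝ | (r : ℂ) ∈ spectrum ℂ (matFlow A t)} lam)
    (x : EuclideanSpace ℂ (Fin n)) (hx : ‖x‖ = 1)
    (heig : Matrix.toEuclideanLin (matFlow A t) x = (lam : ℂ) • x) :
    qf A x ∈ frontier (numericalRange A) :=
  eigenvector_point_on_boundary_general n A t lam hlam x hx heig
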